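/- arXiv:2105.04994 — 3 statements merged into one kernel-verified Lean document; each statement's English description precedes it below -/
import Mathlib

section
/- Let (X_n)_{n≥0} be a critical RDE-chain with associated random vector (M,Q) in [0,∞)^2 satisfying P(M=0)=0, P(Q=0)<1, and the criticality condition liminf_n Π_n=0 and limsup_n Π_n=+∞ a.s. Then the chain is locally contractive: for every compact set K⊂ℝ and all x,y≥0, |X_n^x−X_n^y|·1{X_n^x∈K} → 0 almost surely as n→∞. -/
/-!
Since `X^x_n - X^y_n = Π_n (x - y)`, it suffices that for every `δ > 0` and every upper bound `C`
of `K`, almost surely `δ ≤ Π_n` and `X^x_n ≤ C` hold only finitely often. If they held infinitely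
often, then `X^x_n ≥ M_{j+1} ⋯ M_{n-1} Q_j` for `j < n` would force `δ Q_j ≤ C Π_{j+1} = C Π_j M_j`
for every `j`. Choose `t > 0` with `P(C t M < δ Q) > 0`. By criticality `Π_n ≤ t` infinitely
often, and since `(M_{n+1}, Q_{n+1})` is independent of the past, Lévy's conditional
Borel–Cantelli lemma gives some `n` with `Π_n ≤ t` and `C t M_n < δ Q_n`, a contradiction.
-/

open MeasureTheory ProbabilityTheory Filter Finset

theorem frequently_atTop_succ_iff {p : ℕ → Prop} :
    (∃ᶠ n in atTop, p (n + 1)) ↔ ∃ᶠ n in atTop, p n := by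
  conv_rhs => rw [← map_add_atTop_eq_nat 1]
  exact frequently_map.symm

theorem tendsto_sum_range_atTop_of_frequently_le {f : ℕ → ℝ} {p : ℝ} (hf : ∀ n, 0 ≤ f n)
    (hp : 0 < p) (hfreq : ∃ᶠ n in atTop, p ≤ f n) :
    Tendsto (fun n => ∑ k ∈ range n, f k) atTop atTop := by
  refine (not_summable_iff_tendsto_nat_atTop_of_nonneg hf).1 fun hsum => ?_
  exact hfreq ((hsum.tendsto_atTop_zero.eventually (gt_mem_nhds hp)).mono fun n h => not_le.2 h)

theorem tendsto_mul_indicator_of_eventually_lt {a b : ℕ → ℝ} {K : Set ℝ} (ha : ∀ n, 0 ≤ a n)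
    (h : ∀ m : ℕ, ∀ᶠ n in atTop, b n ∈ K → a n < 1 / (m + 1)) :
    Tendsto (fun n => a n * K.indicator (fun _ => 1) (b n)) atTop (nhds 0) := by
  refine tendsto_order.2 ⟨fun ε hε => Eventually.of_forall fun n => ?_, fun ε hε => ?_⟩
  · exact hε.trans_le (mul_nonneg (ha n) (Set.indicator_nonneg (fun _ _ => zero_le_one) _))
  obtain ⟨m, hm⟩ := exists_nat_one_div_lt hε
  filter_upwards [h m] with n hn
  by_cases hK : b n ∈ K
  · simpa [Set.indicator_of_mem hK] using (hn hK).trans hm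
  · simpa [Set.indicator_of_notMem hK] using hε

def IsRDEPath (m q X : ℕ → ℝ) : Prop := ∀ n, X (n + 1) = m n * X n + q n

namespace IsRDEPath

variable {m q X Y : ℕ → ℝ}

theorem sub_eq (hX : IsRDEPath m q X) (hY : IsRDEPath m q Y) (n : ℕ) :
    X n - Y n = (∏ k ∈ range n, m k) * (X 0 - Y 0) := by
  induction n with
  | zero => simp
  | succ n ih => rw [hX, hY, prod_range_succ, mul_comm _ (m n), mul_assoc, ← ih]; ring

theorem nonneg (hm : ∀ n, 0 ≤ m n) (hq : ∀ n, 0 ≤ q n) (hX : IsRDEPath m q X)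
    (hX0 : 0 ≤ X 0) (n : ℕ) : 0 ≤ X n := by
  induction n with
  | zero => exact hX0
  | succ n ih => rw [hX]; exact add_nonneg (mul_nonneg (hm n) ih) (hq n)

theorem prod_Ico_mul_le (hm : ∀ n, 0 ≤ m n) (hq : ∀ n, 0 ≤ q n) (hX : IsRDEPath m q X)
    (hX0 : 0 ≤ X 0) {j n : ℕ} (hjn : j < n) : (∏ k ∈ Ico (j + 1) n, m k) * q j ≤ X n := by
  induction n, hjn using Nat.le_induction with
  | base =>
    rw [Ico_self, prod_empty, one_mul, hX]
    exact le_add_of_nonneg_left (mul_nonneg (hm j) (nonneg hm hq hX hX0 j))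
  | succ n hjn ih =>
    rw [prod_Ico_succ_top hjn, hX, mul_right_comm, mul_comm _ (m n)]
    exact le_add_of_le_of_nonneg (mul_le_mul_of_nonneg_left ih (hm n)) (hq n)

theorem mul_le_of_frequently (hm : ∀ n, 0 ≤ m n) (hq : ∀ n, 0 ≤ q n) (hX : IsRDEPath m q X)
    (hX0 : 0 ≤ X 0) {δ C : ℝ}
    (hfreq : ∃ᶠ n in atTop, δ ≤ ∏ k ∈ range n, m k ∧ X n ≤ C) (j : ℕ) :
    δ * q j ≤ C * ∏ k ∈ range (j + 1), m k := by
  obtain ⟨n, hjn, hδ, hC⟩ := (frequently_atTop.1 hfreq) (j + 1)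
  have hprod : 0 ≤ ∏ k ∈ range (j + 1), m k := prod_nonneg fun k _ => hm k
  calc δ * q j ≤ (∏ k ∈ range n, m k) * q j := mul_le_mul_of_nonneg_right hδ (hq j)
    _ = (∏ k ∈ range (j + 1), m k) * ((∏ k ∈ Ico (j + 1) n, m k) * q j) := by
      rw [← prod_range_mul_prod_Ico _ hjn, mul_assoc]
    _ ≤ (∏ k ∈ range (j + 1), m k) * C :=
      mul_le_mul_of_nonneg_left ((prod_Ico_mul_le hm hq hX hX0 hjn).trans hC) hprod
    _ = C * ∏ k ∈ range (j + 1), m k := mul_comm _ _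

theorem eventually_not_le_prod_and_le (hm : ∀ n, 0 ≤ m n) (hq : ∀ n, 0 ≤ q n)
    (hX : IsRDEPath m q X) (hX0 : 0 ≤ X 0) {δ C t : ℝ}
    (hbad : ∃ n, ∏ k ∈ range n, m k ≤ t ∧ C * t * m n < δ * q n) :
    ∀ᶠ n in atTop, ¬(δ ≤ ∏ k ∈ range n, m k ∧ X n ≤ C) := by
  rw [← not_frequently]
  intro hfreq
  obtain ⟨n, ht, hlt⟩ := hbad
  obtain ⟨n', -, hC⟩ := hfreq.exists
  have hC0 : 0 ≤ C := (nonneg hm hq hX hX0 n').trans hC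
  refine lt_irrefl (δ * q n) ?_
  calc δ * q n ≤ C * ∏ k ∈ range (n + 1), m k := mul_le_of_frequently hm hq hX hX0 hfreq n
    _ = C * (∏ k ∈ range n, m k) * m n := by rw [prod_range_succ, mul_assoc]
    _ ≤ C * t * m n := by gcongr; exact hm n
    _ < δ * q n := hlt

end IsRDEPath

section
variable {Ω β : Type*} {m0 : MeasurableSpace Ω} [mβ : MeasurableSpace β] {P : Measure Ω}
  [IsProbabilityMeasure P]

theorem condExp_indicator_inter_preimage {m : MeasurableSpace Ω} (hm : m ≤ m0) {A : Set Ω}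
    (hA : MeasurableSet[m] A) {f : Ω → β} (hf : Measurable[m0] f) {S : Set β} (hS : MeasurableSet S)
    (hindep : Indep (MeasurableSpace.comap f mβ) m P) :
    P[(A ∩ f ⁻¹' S).indicator (1 : Ω → ℝ) | m] =ᵐ[P] A.indicator fun _ => P.real (f ⁻¹' S) := by
  have hint : Integrable ((f ⁻¹' S).indicator (1 : Ω → ℝ)) P :=
    (integrable_const 1).indicator (hf hS)
  have hfresh := condExp_indep_eq hf.comap_le hm
    ((stronglyMeasurable_one (α := Ω) (β := ℝ)).indicator ⟨S, hS, rfl⟩) hindep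
  classical
  rw [← Set.indicator_indicator]
  filter_upwards [condExp_indicator hint hA, hfresh] with ω h hω
  rw [h, Set.indicator_apply, Set.indicator_apply, hω, integral_indicator_one (hf hS)]

theorem ae_frequently_and_mem_of_frequently {ℱ : Filtration ℕ m0} {f : ℕ → Ω → β}
    (hf : ∀ n, Measurable[ℱ n] (f n))
    (hindep : ∀ n, Indep (MeasurableSpace.comap (f (n + 1)) mβ) (ℱ n) P)
    {S : Set β} (hS : MeasurableSet S) {p : ℝ} (hp : 0 < p)
    (hprob : ∀ n, p ≤ P.real (f (n + 1) ⁻¹' S)) {A : ℕ → Set Ω}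
    (hA : ∀ n, MeasurableSet[ℱ n] (A n)) :
    ∀ᵐ ω ∂P, (∃ᶠ n in atTop, ω ∈ A n) → ∃ᶠ n in atTop, ω ∈ A n ∧ f (n + 1) ω ∈ S := by
  -- `s (k + 1) = A k ∩ f (k + 1) ⁻¹' S`; the junk value `s 0 = A 0 ∩ f 0 ⁻¹' S` is harmless.
  set s : ℕ → Set Ω := fun n => A (n - 1) ∩ f n ⁻¹' S
  have hs : ∀ n, MeasurableSet[ℱ n] (s n) :=
    fun n => (ℱ.mono (Nat.sub_le n 1) _ (hA _)).inter (hf n hS)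
  have hcond : ∀ᵐ ω ∂P, ∀ k, P[(s (k + 1)).indicator (1 : Ω → ℝ) | ℱ k] ω =
      (A k).indicator (fun _ => P.real (f (k + 1) ⁻¹' S)) ω :=
    ae_all_iff.2 fun k => condExp_indicator_inter_preimage (ℱ.le k) (hA k)
      ((hf (k + 1)).mono (ℱ.le _) le_rfl) hS (hindep k)
  filter_upwards [ae_mem_limsup_atTop_iff P hs, hcond] with ω hlevy hω hfreq
  have hsum := tendsto_sum_range_atTop_of_frequently_le
    (f := fun k => (A k).indicator (fun _ => P.real (f (k + 1) ⁻¹' S)) ω)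
    (fun k => Set.indicator_nonneg (fun _ _ => measureReal_nonneg) ω) hp
    (hfreq.mono fun k hk => by simpa only [Set.indicator_of_mem hk] using hprob k)
  simp only [← hω] at hsum
  rw [← hlevy, mem_limsup_iff_frequently_mem, ← frequently_atTop_succ_iff] at hsum
  exact hsum

end

theorem exists_pos_measure_mul_lt_mul {Ω : Type*} [MeasurableSpace Ω] {P : Measure Ω}
    {M Q : Ω → ℝ} (hQ : 0 < P {ω | 0 < Q ω}) (a : ℝ) {b : ℝ} (hb : 0 < b) :
    ∃ t > 0, 0 < P {ω | a * t * M ω < b * Q ω} := by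
  by_contra! hnull
  have hcover : {ω | 0 < Q ω} ⊆ ⋃ k : ℕ, {ω | a * (1 / (k + 1)) * M ω < b * Q ω} := by
    intro ω hω
    have hlim : Tendsto (fun k : ℕ => a * (1 / ((k : ℝ) + 1)) * M ω) atTop (nhds 0) := by
      simpa using ((tendsto_one_div_add_atTop_nhds_zero_nat).const_mul a).mul_const (M ω)
    exact Set.mem_iUnion.2 ((hlim.eventually (gt_mem_nhds (mul_pos hb hω))).exists)
  refine hQ.ne' (measure_mono_null hcover (measure_iUnion_null fun k => ?_))
  exact nonpos_iff_eq_zero.1 (hnull _ Nat.one_div_pos_of_nat)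

section
variable {Ω : Type*} [MeasurableSpace Ω] {P : Measure Ω} [IsProbabilityMeasure P]
  {M Q X : ℕ → Ω → ℝ}

theorem ae_eventually_not_le_prod_and_le (hM : ∀ n, Measurable (M n))
    (hQ : ∀ n, Measurable (Q n)) (hMnonneg : ∀ n ω, 0 ≤ M n ω) (hQnonneg : ∀ n ω, 0 ≤ Q n ω)
    (hindep : iIndepFun (fun n ω => (M n ω, Q n ω)) P)
    (hident : ∀ n, IdentDistrib (fun ω => (M n ω, Q n ω)) (fun ω => (M 0 ω, Q 0 ω)) P P)
    (hQ0 : P {ω | Q 0 ω = 0} < 1)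
    (hX : ∀ ω, IsRDEPath (M · ω) (Q · ω) (X · ω)) (hX0 : ∀ ω, 0 ≤ X 0 ω)
    {δ : ℝ} (hδ : 0 < δ) (C : ℝ) :
    ∀ᵐ ω ∂P, (∀ t > 0, ∃ᶠ n in atTop, ∏ k ∈ range n, M k ω < t) →
      ∀ᶠ n in atTop, ¬(δ ≤ ∏ k ∈ range n, M k ω ∧ X n ω ≤ C) := by
  set f : ℕ → Ω → ℝ × ℝ := fun n ω => (M n ω, Q n ω)
  have hsm : ∀ n, StronglyMeasurable (f n) := fun n => ((hM n).prodMk (hQ n)).stronglyMeasurable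
  set ℱ := Filtration.natural f hsm
  have hadapted : ∀ n, Measurable[ℱ n] (f n) :=
    fun n => (Filtration.stronglyAdapted_natural hsm n).measurable
  have hQpos : 0 < P {ω | 0 < Q 0 ω} := by
    have : {ω | 0 < Q 0 ω} = {ω | Q 0 ω = 0}ᶜ := by
      ext ω; simp [lt_iff_le_and_ne, hQnonneg 0 ω, eq_comm]
    rw [this, prob_compl_eq_one_sub (measurableSet_eq_fun (hQ 0) measurable_const)]
    exact tsub_pos_of_lt hQ0
  obtain ⟨t, ht, hprob⟩ := exists_pos_measure_mul_lt_mul (M := M 0) hQpos C hδ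
  set S : Set (ℝ × ℝ) := {p | C * t * p.1 < δ * p.2}
  have hS : MeasurableSet S := measurableSet_lt (by fun_prop) (by fun_prop)
  have hA : ∀ n, MeasurableSet[ℱ n] {ω | ∏ k ∈ range (n + 1), M k ω ≤ t} := fun n =>
    measurableSet_le (Finset.measurable_fun_prod _ fun k hk => measurable_fst.comp
      ((hadapted k).mono (ℱ.mono (Nat.lt_succ_iff.1 (mem_range.1 hk))) le_rfl))
      measurable_const
  have hlevy := ae_frequently_and_mem_of_frequently hadapted
    (fun n => hindep.indep_comap_natural_of_lt hsm n.lt_succ_self) hS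
    (ENNReal.toReal_pos hprob.ne' (measure_ne_top _ _))
    (fun n => ((hident (n + 1)).measure_mem_eq hS).symm ▸ le_rfl) hA
  filter_upwards [hlevy] with ω hω hcrit
  obtain ⟨n, hprod, hMQ⟩ :=
    (hω ((frequently_atTop_succ_iff.2 (hcrit t ht)).mono fun n h => h.le)).exists
  exact (hX ω).eventually_not_le_prod_and_le (hMnonneg · ω) (hQnonneg · ω) (hX0 ω)
    ⟨n + 1, hprod, hMQ⟩

end

theorem critical_RDE_chain_locally_contractive_general
    {Ω : Type*} [MeasurableSpace Ω] (P : Measure Ω) [IsProbabilityMeasure P]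
    (M Q : ℕ → Ω → ℝ)
    (hMmeas : ∀ n, Measurable (M n)) (hQmeas : ∀ n, Measurable (Q n))
    (hMnonneg : ∀ n ω, 0 ≤ M n ω) (hQnonneg : ∀ n ω, 0 ≤ Q n ω)
    (hindep : iIndepFun (fun n ω => (M n ω, Q n ω)) P)
    (hident : ∀ n, IdentDistrib (fun ω => (M n ω, Q n ω)) (fun ω => (M 0 ω, Q 0 ω)) P P)
    (hQ0 : P {ω | Q 0 ω = 0} < 1)
    (Pi : ℕ → Ω → ℝ) (hPi : ∀ n ω, Pi n ω = ∏ k ∈ Finset.range n, M k ω)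
    (hcrit : ∀ᵐ ω ∂P, (∀ ε > (0:ℝ), ∃ᶠ n in atTop, Pi n ω < ε) ∧
      (∀ c : ℝ, ∃ᶠ n in atTop, c < Pi n ω))
    (X : ℝ → ℕ → Ω → ℝ)
    (hX0 : ∀ x ω, X x 0 ω = x)
    (hXrec : ∀ x n ω, X x (n+1) ω = M n ω * X x n ω + Q n ω) :
    ∀ K : Set ℝ, IsCompact K → ∀ x y : ℝ, 0 ≤ x → 0 ≤ y →
      ∀ᵐ ω ∂P, Tendsto
        (fun n => |X x n ω - X y n ω| * Set.indicator K (fun _ => (1:ℝ)) (X x n ω))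
        atTop (nhds 0) := by
  intro K hK x y hx _
  simp only [hPi] at hcrit
  obtain ⟨C, hC⟩ := hK.bddAbove
  have hpath : ∀ x ω, IsRDEPath (M · ω) (Q · ω) (X x · ω) := fun x ω n => hXrec x n ω
  have hsmall : ∀ᵐ ω ∂P, ∀ m : ℕ, ∀ᶠ n in atTop,
      X x n ω ∈ K → ∏ k ∈ range n, M k ω < 1 / (m + 1) := by
    refine ae_all_iff.2 fun m => ?_
    filter_upwards [ae_eventually_not_le_prod_and_le hMmeas hQmeas hMnonneg hQnonneg hindep
      hident hQ0 (hpath x) (fun ω => (hX0 x ω).symm ▸ hx) Nat.one_div_pos_of_nat C, hcrit]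
      with ω hω hcritω
    exact (hω hcritω.1).mono fun n hn hK => lt_of_not_ge fun hle => hn ⟨hle, hC hK⟩
  filter_upwards [hsmall] with ω hω
  have hprod : ∀ n, 0 ≤ ∏ k ∈ range n, M k ω := fun n => prod_nonneg fun k _ => hMnonneg k ω
  have hlim := (tendsto_mul_indicator_of_eventually_lt hprod hω).mul_const |x - y|
  rw [zero_mul] at hlim
  refine hlim.congr fun n => ?_
  rw [(hpath x ω).sub_eq (hpath y ω), hX0, hX0, abs_mul, abs_of_nonneg (hprod n)]
  ring

/-- A critical RDE-chain with associated random vector `(M,Q)` in `[0,∞)²`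
satisfying `P(M=0)=0`, `P(Q=0)<1` and the criticality condition
`liminf Πₙ = 0`, `limsup Πₙ = ∞` a.s. is locally contractive. -/
theorem critical_RDE_chain_locally_contractive
    {Ω : Type*} [MeasurableSpace Ω] (P : Measure Ω) [IsProbabilityMeasure P]
    (M Q : ℕ → Ω → ℝ)
    (hMmeas : ∀ n, Measurable (M n)) (hQmeas : ∀ n, Measurable (Q n))
    (hMnonneg : ∀ n ω, 0 ≤ M n ω) (hQnonneg : ∀ n ω, 0 ≤ Q n ω)
    (hindep : iIndepFun (fun n ω => (M n ω, Q n ω)) P)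
    (hident : ∀ n, IdentDistrib (fun ω => (M n ω, Q n ω)) (fun ω => (M 0 ω, Q 0 ω)) P P)
    (hM0 : P {ω | M 0 ω = 0} = 0)
    (hQ0 : P {ω | Q 0 ω = 0} < 1)
    (Pi : ℕ → Ω → ℝ) (hPi : ∀ n ω, Pi n ω = ∏ k ∈ Finset.range n, M k ω)
    (hcrit : ∀ᵐ ω ∂P, (∀ ε > (0:ℝ), ∃ᶠ n in atTop, Pi n ω < ε) ∧
      (∀ c : ℝ, ∃ᶠ n in atTop, c < Pi n ω))
    (X : ℝ → ℕ → Ω → ℝ)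
    (hX0 : ∀ x ω, X x 0 ω = x)
    (hXrec : ∀ x n ω, X x (n+1) ω = M n ω * X x n ω + Q n ω) :
    ∀ K : Set ℝ, IsCompact K → ∀ x y : ℝ, 0 ≤ x → 0 ≤ y →
      ∀ᵐ ω ∂P, Tendsto
        (fun n => |X x n ω - X y n ω| * Set.indicator K (fun _ => (1:ℝ)) (X x n ω))
        atTop (nhds 0) :=
  critical_RDE_chain_locally_contractive_general P M Q hMmeas hQmeas hMnonneg hQnonneg hindep hident
    hQ0 Pi hPi hcrit X hX0 hXrec
end

section
/- Let (X_n)_{n≥0} be a critical RDE-chain with associated random vector (M,Q) in [0,∞)^2 satisfying P(M=0)=0, P(Q=0)<1, and the criticality condition liminf_n Π_n=0 and limsup_n Π_n=+∞ a.s., and let (X_{σ_n})_{n≥0} be the embedded ladder chain obtained by sampling at the strictly descending ladder epochs σ_n of S_n=log Π_n. Then (X_n)_{n≥0} is recurrent if and only if (X_{σ_n})_{n≥0} is recurrent; in particular, since X_{σ_n+k} ≥ X_{σ_n} a.s. for all n≥0 and 0≤k<σ_{n+1}−σ_n, transience of the ladder chain (X_{σ_n}^x → ∞ a.s.) implies transience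 of (X_n)_{n≥0}. -/
/-!
On a strictly descending ladder block `σₙ ≤ k < σₙ₊₁` the walk `S` stays at or above `S_{σₙ}`,
i.e. `M_{σₙ} ⋯ M_{k-1} ≥ 1`; since `Q ≥ 0`, iterating the recursion gives
`X_k ≥ M_{σₙ} ⋯ M_{k-1} · X_{σₙ} ≥ X_{σₙ}`. So a bounded value of the chain at time `k` bounds
the ladder chain at the epoch opening `k`'s block, and divergence of the ladder chain forces
divergence of the chain; the converse implication for recurrence holds because the ladder chain
is a subsequence. Everything is pathwise: `Πₙ → 0` along a subsequence makes the ladder epochs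
finite, and `limsup Πₙ = ∞` rules out `Mₙ = 0`.
-/

open MeasureTheory ProbabilityTheory Filter

theorem ne_zero_of_frequently_pos_prod {M : ℕ → ℝ}
    (h : ∃ᶠ n in atTop, 0 < ∏ k ∈ Finset.range n, M k) (n : ℕ) : M n ≠ 0 := fun hn =>
  h <| (eventually_gt_atTop n).mono fun _ hm =>
    (Finset.prod_eq_zero (Finset.mem_range.2 hm) hn).not_gt

theorem frequently_sum_log_lt_of_frequently_prod_lt {M : ℕ → ℝ} (hM : ∀ n, 0 < M n)
    (h : ∀ ε > (0 : ℝ), ∃ᶠ n in atTop, ∏ k ∈ Finset.range n, M k < ε) (m : ℕ) :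
    ∃ᶠ n in atTop, ∑ k ∈ Finset.range n, Real.log (M k) < ∑ k ∈ Finset.range m, Real.log (M k) := by
  have hprod : ∀ n, 0 < ∏ k ∈ Finset.range n, M k := fun n => Finset.prod_pos fun k _ => hM k
  refine (h _ (hprod m)).mono fun n hn => ?_
  rw [← Real.log_prod fun k _ => (hM k).ne', ← Real.log_prod fun k _ => (hM k).ne']
  exact Real.log_lt_log (hprod n) hn

theorem exists_frequently_abs_sub_le_iff {ι : Type*} {l : Filter ι} {f : ι → ℝ}
    (hf : ∀ i, 0 ≤ f i) (x : ℝ) :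
    (∃ C, ∃ᶠ i in l, |f i - x| ≤ C) ↔ ∃ C, ∃ᶠ i in l, f i ≤ C := by
  constructor
  · rintro ⟨C, hC⟩
    exact ⟨x + C, hC.mono fun i hi => by linarith [le_abs_self (f i - x)]⟩
  · rintro ⟨C, hC⟩
    refine ⟨C + |x|, hC.mono fun i hi => abs_le.2 ⟨?_, ?_⟩⟩
    · linarith [hf i, le_abs_self x]
    · linarith [neg_abs_le x]

section Blocks

variable {σ : ℕ → ℕ}

theorem StrictMono.exists_tendsto_mem_Ico (hσ : StrictMono σ) (hσ0 : σ 0 = 0) :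
    ∃ b : ℕ → ℕ, Tendsto b atTop atTop ∧ ∀ n, n ∈ Set.Ico (σ (b n)) (σ (b n + 1)) := by
  have hblock : ∀ n, ∃ m, n ∈ Set.Ico (σ m) (σ (m + 1)) := by
    intro n
    induction n with
    | zero => exact ⟨0, hσ0.le, Nat.zero_lt_of_lt (hσ Nat.zero_lt_one)⟩
    | succ n ih =>
      obtain ⟨m, hm, hnm⟩ := ih
      rcases (Nat.succ_le_of_lt hnm).lt_or_eq with h | h
      · exact ⟨m, by omega, h⟩
      · exact ⟨m + 1, h.ge, h.trans_lt (hσ (Nat.lt_succ_self _))⟩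
  choose b hb using hblock
  refine ⟨b, tendsto_atTop_atTop.2 fun N => ⟨σ N, fun n hn => ?_⟩, hb⟩
  exact Nat.lt_succ_iff.1 (hσ.lt_iff_lt.1 (hn.trans_lt (hb n).2))

variable {α : Type*} [Preorder α] {f : ℕ → α}

theorem frequently_le_iff_frequently_comp_le (hσ : StrictMono σ) (hσ0 : σ 0 = 0)
    (hf : ∀ m, ∀ n ∈ Set.Ico (σ m) (σ (m + 1)), f (σ m) ≤ f n) (C : α) :
    (∃ᶠ n in atTop, f n ≤ C) ↔ ∃ᶠ m in atTop, f (σ m) ≤ C := by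
  obtain ⟨b, hb, hbσ⟩ := hσ.exists_tendsto_mem_Ico hσ0
  exact ⟨fun h => hb.frequently (h.mono fun n hn => (hf _ n (hbσ n)).trans hn),
    hσ.tendsto_atTop.frequently (p := fun n => f n ≤ C)⟩

theorem tendsto_atTop_of_tendsto_comp (hσ : StrictMono σ) (hσ0 : σ 0 = 0)
    (hf : ∀ m, ∀ n ∈ Set.Ico (σ m) (σ (m + 1)), f (σ m) ≤ f n)
    (h : Tendsto (f ∘ σ) atTop atTop) : Tendsto f atTop atTop := by
  obtain ⟨b, hb, hbσ⟩ := hσ.exists_tendsto_mem_Ico hσ0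
  exact tendsto_atTop_mono (fun n => hf _ n (hbσ n)) (h.comp hb)

end Blocks

/-- If `S` never again drops below `S (σ n)`, then `σ (n + 1) = sInf ∅ = 0`. -/
def IsStrictDescLadderEpochs (S : ℕ → ℝ) (σ : ℕ → ℕ) : Prop :=
  σ 0 = 0 ∧ ∀ n, σ (n + 1) = sInf {k | σ n < k ∧ S k < S (σ n)}

namespace IsStrictDescLadderEpochs

variable {S : ℕ → ℝ} {σ : ℕ → ℕ}

theorem le_of_mem_Ico (hσ : IsStrictDescLadderEpochs S σ) {n j : ℕ}
    (hj : j ∈ Set.Ico (σ n) (σ (n + 1))) : S (σ n) ≤ S j := by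
  rcases hj.1.eq_or_lt with rfl | hnj
  · exact le_rfl
  · have hj' := hj.2
    rw [hσ.2 n] at hj'
    exact not_lt.1 fun hlt => Nat.notMem_of_lt_sInf hj' (show j ∈ {k | σ n < k ∧ S k < S (σ n)} from ⟨hnj, hlt⟩)

theorem strictMono (hσ : IsStrictDescLadderEpochs S σ) (hS : ∀ m, ∃ᶠ k in atTop, S k < S m) :
    StrictMono σ := by
  refine strictMono_nat_of_lt_succ fun n => ?_
  obtain ⟨k, hk⟩ := ((hS (σ n)).and_eventually (eventually_gt_atTop (σ n))).exists
  have hne : {k | σ n < k ∧ S k < S (σ n)}.Nonempty := ⟨k, hk.2, hk.1⟩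
  rw [hσ.2 n]
  exact (Nat.sInf_mem hne).1

end IsStrictDescLadderEpochs

section RDE

variable {M Q X : ℕ → ℝ}

theorem rde_nonneg (hM : ∀ n, 0 ≤ M n) (hQ : ∀ n, 0 ≤ Q n)
    (hX : ∀ n, X (n + 1) = M n * X n + Q n) (hX0 : 0 ≤ X 0) (n : ℕ) : 0 ≤ X n := by
  induction n with
  | zero => exact hX0
  | succ n ih => rw [hX]; exact add_nonneg (mul_nonneg (hM n) ih) (hQ n)

theorem prod_mul_le_rde (hM : ∀ n, 0 ≤ M n) (hQ : ∀ n, 0 ≤ Q n)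
    (hX : ∀ n, X (n + 1) = M n * X n + Q n) (m k : ℕ) :
    (∏ j ∈ Finset.range k, M (m + j)) * X m ≤ X (m + k) := by
  induction k with
  | zero => simp
  | succ k ih =>
    calc (∏ j ∈ Finset.range (k + 1), M (m + j)) * X m
        = M (m + k) * ((∏ j ∈ Finset.range k, M (m + j)) * X m) := by
          rw [Finset.prod_range_succ]; ring
      _ ≤ M (m + k) * X (m + k) := mul_le_mul_of_nonneg_left ih (hM _)
      _ ≤ X (m + (k + 1)) := by rw [← add_assoc, hX]; linarith [hQ (m + k)]

theorem rde_le_of_sum_log_le (hM : ∀ n, 0 < M n) (hQ : ∀ n, 0 ≤ Q n)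
    (hX : ∀ n, X (n + 1) = M n * X n + Q n) {m k : ℕ} (hXm : 0 ≤ X m)
    (h : ∑ j ∈ Finset.range m, Real.log (M j) ≤ ∑ j ∈ Finset.range (m + k), Real.log (M j)) :
    X m ≤ X (m + k) := by
  have hprod : 0 < ∏ j ∈ Finset.range k, M (m + j) := Finset.prod_pos fun j _ => hM _
  have hone : 1 ≤ ∏ j ∈ Finset.range k, M (m + j) := by
    rw [← Real.log_nonneg_iff hprod, Real.log_prod fun j _ => (hM _).ne']
    rw [Finset.sum_range_add] at h
    linarith
  calc X m ≤ (∏ j ∈ Finset.range k, M (m + j)) * X m := le_mul_of_one_le_left hXm hone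
    _ ≤ X (m + k) := prod_mul_le_rde (fun n => (hM n).le) hQ hX m k

theorem rde_ladder_le_of_mem_Ico (hM : ∀ n, 0 < M n) (hQ : ∀ n, 0 ≤ Q n)
    (hX : ∀ n, X (n + 1) = M n * X n + Q n) (hXnonneg : ∀ n, 0 ≤ X n) {S : ℕ → ℝ}
    (hS : ∀ n, S n = ∑ j ∈ Finset.range n, Real.log (M j)) {σ : ℕ → ℕ}
    (hσ : IsStrictDescLadderEpochs S σ) (m : ℕ) :
    ∀ n ∈ Set.Ico (σ m) (σ (m + 1)), X (σ m) ≤ X n := by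
  intro n hn
  obtain ⟨k, rfl⟩ := Nat.exists_eq_add_of_le hn.1
  refine rde_le_of_sum_log_le hM hQ hX (hXnonneg _) ?_
  rw [← hS, ← hS]
  exact hσ.le_of_mem_Ico hn

end RDE

theorem recurrence_chain_iff_ladder_chain_general
    {Ω : Type*} [MeasurableSpace Ω] (P : Measure Ω)
    (M Q : ℕ → Ω → ℝ)
    (hMnonneg : ∀ n ω, 0 ≤ M n ω) (hQnonneg : ∀ n ω, 0 ≤ Q n ω)
    (Pi : ℕ → Ω → ℝ) (hPi : ∀ n ω, Pi n ω = ∏ k ∈ Finset.range n, M k ω)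
    (hcrit : ∀ᵐ ω ∂P, (∀ ε > (0:ℝ), ∃ᶠ n in atTop, Pi n ω < ε) ∧
      (∀ c : ℝ, ∃ᶠ n in atTop, c < Pi n ω))
    (S : ℕ → Ω → ℝ) (hS : ∀ n ω, S n ω = ∑ k ∈ Finset.range n, Real.log (M k ω))
    (σs : ℕ → Ω → ℕ) (hσs0 : ∀ ω, σs 0 ω = 0)
    (hσs : ∀ n ω, σs (n+1) ω = sInf {k | σs n ω < k ∧ S k ω < S (σs n ω) ω})
    (X : ℝ → ℕ → Ω → ℝ)
    (hX0 : ∀ x ω, X x 0 ω = x)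
    (hXrec : ∀ x n ω, X x (n+1) ω = M n ω * X x n ω + Q n ω) :
    ((∀ x : ℝ, 0 ≤ x → ∀ᵐ ω ∂P, ∃ C : ℝ, ∃ᶠ n in atTop, |X x n ω - x| ≤ C) ↔
      (∀ x : ℝ, 0 ≤ x → ∀ᵐ ω ∂P, ∃ C : ℝ, ∃ᶠ n in atTop, |X x (σs n ω) ω - x| ≤ C)) ∧
    (∀ x : ℝ, 0 ≤ x → ∀ᵐ ω ∂P, ∀ n : ℕ, ∀ k : ℕ, k < σs (n+1) ω - σs n ω →
      X x (σs n ω) ω ≤ X x (σs n ω + k) ω) ∧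
    ((∀ x : ℝ, 0 ≤ x → ∀ᵐ ω ∂P, Tendsto (fun n => X x (σs n ω) ω) atTop atTop) →
      (∀ x : ℝ, 0 ≤ x → ∀ᵐ ω ∂P, Tendsto (fun n => X x n ω) atTop atTop)) := by
  simp only [hPi] at hcrit
  have hXnonneg : ∀ x, 0 ≤ x → ∀ n ω, 0 ≤ X x n ω := fun x hx n ω =>
    rde_nonneg (X := (X x · ω)) (hMnonneg · ω) (hQnonneg · ω) (hXrec x · ω) ((hX0 x ω).symm ▸ hx) n
  have hladder : ∀ ω, IsStrictDescLadderEpochs (S · ω) (σs · ω) := fun ω => ⟨hσs0 ω, (hσs · ω)⟩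
  have hgood : ∀ᵐ ω ∂P, StrictMono (σs · ω) ∧ ∀ x, 0 ≤ x →
      ∀ m, ∀ n ∈ Set.Ico (σs m ω) (σs (m + 1) ω), X x (σs m ω) ω ≤ X x n ω := by
    filter_upwards [hcrit] with ω ⟨hsmall, hlarge⟩
    have hM : ∀ n, 0 < M n ω := fun n =>
      (hMnonneg n ω).lt_of_ne' (ne_zero_of_frequently_pos_prod (hlarge 0) n)
    refine ⟨(hladder ω).strictMono fun m => ?_, fun x hx => rde_ladder_le_of_mem_Ico hM
      (hQnonneg · ω) (hXrec x · ω) (hXnonneg x hx · ω) (hS · ω) (hladder ω)⟩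
    simpa only [hS] using frequently_sum_log_lt_of_frequently_prod_lt hM hsmall m
  refine ⟨forall₂_congr fun x hx => eventually_congr (hgood.mono fun ω hω => ?_),
    fun x hx => hgood.mono fun ω hω n k hk => hω.2 x hx n _ ⟨by omega, by omega⟩,
    fun h x hx => ((h x hx).and hgood).mono fun ω hω =>
      tendsto_atTop_of_tendsto_comp hω.2.1 (hσs0 ω) (hω.2.2 x hx) hω.1⟩
  rw [exists_frequently_abs_sub_le_iff (hXnonneg x hx · ω),
    exists_frequently_abs_sub_le_iff (fun n => hXnonneg x hx _ ω)]
  exact exists_congr (frequently_le_iff_frequently_comp_le hω.1 (hσs0 ω) (hω.2 x hx))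

/-- For a critical RDE-chain, recurrence is equivalent to recurrence of the
embedded ladder chain sampled at the strictly descending ladder epochs of `Sₙ = log Πₙ`;
moreover `X_{σₙ+k} ≥ X_{σₙ}` a.s. for `0 ≤ k < σ_{n+1} − σₙ`, and transience of the ladder
chain implies transience of the chain. -/
theorem recurrence_chain_iff_ladder_chain
    {Ω : Type*} [MeasurableSpace Ω] (P : Measure Ω) [IsProbabilityMeasure P]
    (M Q : ℕ → Ω → ℝ)
    (hMmeas : ∀ n, Measurable (M n)) (hQmeas : ∀ n, Measurable (Q n))
    (hMnonneg : ∀ n ω, 0 ≤ M n ω) (hQnonneg : ∀ n ω, 0 ≤ Q n ω)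
    (hindep : iIndepFun (fun n ω => (M n ω, Q n ω)) P)
    (hident : ∀ n, IdentDistrib (fun ω => (M n ω, Q n ω)) (fun ω => (M 0 ω, Q 0 ω)) P P)
    (hM0 : P {ω | M 0 ω = 0} = 0)
    (hQ0 : P {ω | Q 0 ω = 0} < 1)
    (Pi : ℕ → Ω → ℝ) (hPi : ∀ n ω, Pi n ω = ∏ k ∈ Finset.range n, M k ω)
    (hcrit : ∀ᵐ ω ∂P, (∀ ε > (0:ℝ), ∃ᶠ n in atTop, Pi n ω < ε) ∧
      (∀ c : ℝ, ∃ᶠ n in atTop, c < Pi n ω))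
    (S : ℕ → Ω → ℝ) (hS : ∀ n ω, S n ω = ∑ k ∈ Finset.range n, Real.log (M k ω))
    (σs : ℕ → Ω → ℕ) (hσs0 : ∀ ω, σs 0 ω = 0)
    (hσs : ∀ n ω, σs (n+1) ω = sInf {k | σs n ω < k ∧ S k ω < S (σs n ω) ω})
    (X : ℝ → ℕ → Ω → ℝ)
    (hX0 : ∀ x ω, X x 0 ω = x)
    (hXrec : ∀ x n ω, X x (n+1) ω = M n ω * X x n ω + Q n ω) :
    ((∀ x : ℝ, 0 ≤ x → ∀ᵐ ω ∂P, ∃ C : ℝ, ∃ᶠ n in atTop, |X x n ω - x| ≤ C) ↔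
      (∀ x : ℝ, 0 ≤ x → ∀ᵐ ω ∂P, ∃ C : ℝ, ∃ᶠ n in atTop, |X x (σs n ω) ω - x| ≤ C)) ∧
    (∀ x : ℝ, 0 ≤ x → ∀ᵐ ω ∂P, ∀ n : ℕ, ∀ k : ℕ, k < σs (n+1) ω - σs n ω →
      X x (σs n ω) ω ≤ X x (σs n ω + k) ω) ∧
    ((∀ x : ℝ, 0 ≤ x → ∀ᵐ ω ∂P, Tendsto (fun n => X x (σs n ω) ω) atTop atTop) →
      (∀ x : ℝ, 0 ≤ x → ∀ᵐ ω ∂P, Tendsto (fun n => X x n ω) atTop atTop)) :=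
  recurrence_chain_iff_ladder_chain_general P M Q hMnonneg hQnonneg Pi hPi hcrit S hS σs hσs0 hσs X
    hX0 hXrec
end

section
/- Let (M_n,Q_n)_{n≥1} be i.i.d. random vectors in [0,∞)^2 with generic copy (M,Q) satisfying P(M=0)=0, P(Q=0)<1, liminf_n Π_n=0 and limsup_n Π_n=+∞ a.s., and let σ be the first strictly descending ladder epoch of S_n (a.s. finite). Then the ladder variable Q^< := e^{S_σ} Σ_{k=1}^{σ} e^{−S_k} Q_k satisfies the almost sure two-sided bounds max_{1≤k≤σ} e^{S_σ−S_k} Q_k ≤ Q^< ≤ σ · max_{1≤k≤σ} Q_k; in particular, log Q^< ≤ log σ + max_{1≤k≤σ} log Q_k and log Q^< ≥ max_{1≤k≤σ}(log Q_k + S_σ − S_k) a.s. (in the extended reals). Moreover, if in addition Q ≤ aM+b a.s. for constants a,b>0, then Q^< ≤ (a+b)σ a.s., so that E log σ < ∞ implies E log_+Q^< < ∞. -/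
/-!
Before the first strict descent the walk stays `≥ 0 = S₀`, and `S_σ < 0`, so `S_σ` is the minimum
of `S₀, …, S_σ`. Hence every weight `e^{S_σ - S_{k+1}}` of `Q^< = ∑_{k<σ} e^{S_σ - S_{k+1}} Q_k`
lies in `(0, 1]`: a single term bounds `Q^<` from below and `∑_{k<σ} Q_k` from above. If
`Q_k ≤ a M_k + b`, then `e^{S_σ - S_{k+1}} Q_k ≤ a e^{S_σ - S_k} + b e^{S_σ - S_{k+1}} ≤ a + b`,
so `Q^< ≤ (a + b) σ` and `log₊ Q^<` is dominated by `log (a + b + 1) + log σ`.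
-/

open MeasureTheory ProbabilityTheory Filter Finset Real

/-- `sInf ∅ = 0` in `ℕ`, so this is `0` when `s` never becomes negative. -/
noncomputable def descendingLadderEpoch (s : ℕ → ℝ) : ℕ := sInf {k | 1 ≤ k ∧ s k < 0}

theorem apply_descendingLadderEpoch_le {s : ℕ → ℝ} (h0 : s 0 = 0) {j : ℕ}
    (hj : j ≤ descendingLadderEpoch s) : s (descendingLadderEpoch s) ≤ s j := by
  set n := descendingLadderEpoch s
  rcases hj.eq_or_lt with rfl | hjn
  · rfl
  have hneg : s n < 0 := (Nat.sInf_mem (Nat.nonempty_of_pos_sInf (j.zero_le.trans_lt hjn))).2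
  rcases Nat.eq_zero_or_pos j with rfl | hj1
  · linarith
  exact hneg.le.trans (not_lt.1 fun hsj => Nat.notMem_of_lt_sInf hjn ⟨hj1, hsj⟩)

theorem Real.exp_neg_log_mul_le_one (x : ℝ) : exp (-log x) * x ≤ 1 := by
  rcases eq_or_ne x 0 with rfl | hx
  · simp
  rw [exp_neg, exp_log_eq_abs hx, inv_mul_le_one₀ (abs_pos.2 hx)]
  exact le_abs_self x

theorem Real.exp_sub_add_log_mul_le (c t x : ℝ) : exp (c - (t + log x)) * x ≤ exp (c - t) := by
  rw [sub_add_eq_sub_sub, sub_eq_add_neg _ (log x), exp_add, mul_assoc]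
  exact mul_le_of_le_one_right (exp_pos _).le (exp_neg_log_mul_le_one x)

theorem sum_range_le_mul_sSup_image (f : ℕ → ℝ) (n : ℕ) :
    ∑ k ∈ range n, f k ≤ n * sSup (f '' {k | k < n}) := by
  have hbdd : BddAbove (f '' {k | k < n}) := ((Set.finite_Iio n).image f).bddAbove
  calc ∑ k ∈ range n, f k ≤ #(range n) • sSup (f '' {k | k < n}) :=
        sum_le_card_nsmul _ _ _ fun k hk => le_csSup hbdd (Set.mem_image_of_mem f (mem_range.1 hk))
    _ = n * sSup (f '' {k | k < n}) := by rw [card_range, nsmul_eq_mul]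

theorem exp_mul_sum_exp_neg_mul (s q : ℕ → ℝ) (n : ℕ) :
    exp (s n) * ∑ k ∈ range n, exp (-s (k + 1)) * q k =
      ∑ k ∈ range n, exp (s n - s (k + 1)) * q k := by
  rw [mul_sum]
  refine sum_congr rfl fun k _ => ?_
  rw [← mul_assoc, ← exp_add, ← sub_eq_add_neg]

section DiscountedSum

variable {s q : ℕ → ℝ} {n : ℕ}

theorem sum_exp_sub_mul_nonneg (hq : ∀ k, 0 ≤ q k) :
    0 ≤ ∑ k ∈ range n, exp (s n - s (k + 1)) * q k :=
  sum_nonneg fun k _ => mul_nonneg (exp_pos _).le (hq k)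

theorem exp_sub_mul_le_sum_exp_sub_mul (hq : ∀ k, 0 ≤ q k) {k : ℕ} (hk : k < n) :
    exp (s n - s (k + 1)) * q k ≤ ∑ j ∈ range n, exp (s n - s (j + 1)) * q j :=
  single_le_sum (f := fun j => exp (s n - s (j + 1)) * q j)
    (fun j _ => mul_nonneg (exp_pos _).le (hq j)) (mem_range.2 hk)

theorem sum_exp_sub_mul_le_sum (hq : ∀ k, 0 ≤ q k) (hmin : ∀ j ≤ n, s n ≤ s j) :
    ∑ k ∈ range n, exp (s n - s (k + 1)) * q k ≤ ∑ k ∈ range n, q k := by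
  refine sum_le_sum fun k hk => mul_le_of_le_one_left (hq k) ?_
  exact exp_le_one_iff.2 (sub_nonpos.2 (hmin _ (mem_range.1 hk)))

theorem sum_exp_sub_mul_le_mul {m : ℕ → ℝ} {a b : ℝ} (ha : 0 ≤ a) (hb : 0 ≤ b)
    (hmin : ∀ j ≤ n, s n ≤ s j) (hs : ∀ k, s (k + 1) = s k + log (m k))
    (hqm : ∀ k, q k ≤ a * m k + b) :
    ∑ k ∈ range n, exp (s n - s (k + 1)) * q k ≤ (a + b) * n := by
  have hterm : ∀ k ∈ range n, exp (s n - s (k + 1)) * q k ≤ a + b := by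
    intro k hk
    have hk := mem_range.1 hk
    have hweight : exp (s n - s (k + 1)) ≤ 1 := exp_le_one_iff.2 (sub_nonpos.2 (hmin _ hk))
    have hweight' : exp (s n - s k) ≤ 1 := exp_le_one_iff.2 (sub_nonpos.2 (hmin _ hk.le))
    have hm : exp (s n - s (k + 1)) * m k ≤ exp (s n - s k) :=
      hs k ▸ exp_sub_add_log_mul_le _ _ _
    calc exp (s n - s (k + 1)) * q k ≤ exp (s n - s (k + 1)) * (a * m k + b) :=
          mul_le_mul_of_nonneg_left (hqm k) (exp_pos _).le
      _ = a * (exp (s n - s (k + 1)) * m k) + b * exp (s n - s (k + 1)) := by ring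
      _ ≤ a * 1 + b * 1 := by gcongr; exact hm.trans hweight'
      _ = a + b := by ring
  calc ∑ k ∈ range n, exp (s n - s (k + 1)) * q k ≤ #(range n) • (a + b) :=
        sum_le_card_nsmul _ _ _ hterm
    _ = (a + b) * n := by rw [card_range, nsmul_eq_mul, mul_comm]

end DiscountedSum

namespace ENNReal

theorem log_ofReal_exp_mul (d y : ℝ) :
    log (ENNReal.ofReal (exp d * y)) = log (ENNReal.ofReal y) + (d : EReal) := by
  rw [ofReal_mul (exp_pos d).le, log_mul_add, log_ofReal_of_pos (exp_pos d), Real.log_exp,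
    add_comm]

theorem log_ofReal_le_log_card_add_iSup {ι : Type*} (t : Finset ι) {f : ι → ℝ}
    (hf : ∀ i ∈ t, 0 ≤ f i) {x : ℝ} (hx : x ≤ ∑ i ∈ t, f i) :
    log (ENNReal.ofReal x) ≤ log (t.card : ℝ≥0∞) + ⨆ i ∈ t, log (ENNReal.ofReal (f i)) := by
  have hsum : ENNReal.ofReal x ≤ t.card * ⨆ i ∈ t, ENNReal.ofReal (f i) := by
    calc ENNReal.ofReal x ≤ ∑ i ∈ t, ENNReal.ofReal (f i) := by
          rw [← ofReal_sum_of_nonneg hf]; exact ofReal_le_ofReal hx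
      _ ≤ t.card • ⨆ i ∈ t, ENNReal.ofReal (f i) :=
          sum_le_card_nsmul _ _ _ fun i hi => le_biSup (fun i => ENNReal.ofReal (f i)) hi
      _ = t.card * ⨆ i ∈ t, ENNReal.ofReal (f i) := nsmul_eq_mul _ _
  calc log (ENNReal.ofReal x) ≤ log (t.card * ⨆ i ∈ t, ENNReal.ofReal (f i)) :=
        log_monotone hsum
    _ = log (t.card : ℝ≥0∞) + ⨆ i ∈ t, log (ENNReal.ofReal (f i)) := by
        rw [log_mul_add]; congr 1; exact logOrderIso.map_iSup₂ _

end ENNReal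

theorem Real.log_max_one_le_of_le_mul_natCast {c x : ℝ} {n : ℕ} (hc : 0 ≤ c) (hx : x ≤ c * n) :
    log (max x 1) ≤ log (c + 1) + log n := by
  rcases Nat.eq_zero_or_pos n with rfl | hn
  · have hx0 : x ≤ 0 := by simpa using hx
    simp [max_eq_right (hx0.trans zero_le_one), log_nonneg (by linarith : (1 : ℝ) ≤ c + 1)]
  have hn : (1 : ℝ) ≤ n := by exact_mod_cast hn
  rw [← log_mul (by linarith) (by linarith)]
  refine log_le_log (by positivity) (max_le ?_ ?_) <;> nlinarith

section Measurability

variable {Ω : Type*} [MeasurableSpace Ω]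

theorem measurable_sInf_setOf {p : ℕ → Ω → Prop} (hp : ∀ k, Measurable (p k)) :
    Measurable fun ω => sInf {k | p k ω} := by
  refine measurable_to_countable' fun n => ?_
  have hiff : ∀ ω, sInf {k | p k ω} = n ↔
      (p n ω ∧ ∀ k, k < n → ¬ p k ω) ∨ (n = 0 ∧ ∀ k, ¬ p k ω) := by
    intro ω
    rcases Set.eq_empty_or_nonempty {k | p k ω} with he | hne
    · simp only [Set.eq_empty_iff_forall_notMem, Set.mem_ofPred_eq] at he
      simp [he, eq_comm]
    · rw [csInf_eq_iff hne]
      have hex : ∃ k, p k ω := hne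
      simp only [Set.mem_ofPred_eq]
      constructor
      · exact fun ⟨hn, hle⟩ => Or.inl ⟨hn, fun k hk hpk => (hle k hpk).not_gt hk⟩
      · rintro (⟨hn, hlt⟩ | ⟨-, hnone⟩)
        · exact ⟨hn, fun k hk => not_lt.1 fun hkn => hlt k hkn hk⟩
        · exact absurd hex (not_exists.2 hnone)
  simp only [Set.preimage, Set.mem_singleton_iff, hiff]
  refine measurableSet_setOfPred.2 (((hp n).and ?_).or (measurable_const.and ?_))
  · exact Measurable.forall fun k => measurable_const.imp (hp k).not
  · exact Measurable.forall fun k => (hp k).not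

theorem measurable_descendingLadderEpoch {S : ℕ → Ω → ℝ} (hS : ∀ k, Measurable (S k)) :
    Measurable fun ω => descendingLadderEpoch (S · ω) :=
  measurable_sInf_setOf fun k =>
    measurable_const.and (measurableSet_setOfPred.1 (measurableSet_lt (hS k) measurable_const))

theorem Measurable.comp_nat_index {β : Type*} [MeasurableSpace β] {F : ℕ → Ω → β}
    (hF : ∀ n, Measurable (F n)) {N : Ω → ℕ} (hN : Measurable N) :
    Measurable fun ω => F (N ω) ω :=
  (measurable_from_prod_countable_left (f := fun p : Ω × ℕ => F p.2 p.1) hF).comp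
    (measurable_id.prodMk hN)

theorem measurable_exp_mul_sum_exp_neg_mul {S Q : ℕ → Ω → ℝ} (hS : ∀ n, Measurable (S n))
    (hQ : ∀ n, Measurable (Q n)) {N : Ω → ℕ} (hN : Measurable N) :
    Measurable fun ω => exp (S (N ω) ω) * ∑ k ∈ range (N ω), exp (-S (k + 1) ω) * Q k ω :=
  Measurable.comp_nat_index (fun n => (hS n).exp.mul
    (measurable_sum _ fun k _ => (hS (k + 1)).neg.exp.mul (hQ k))) hN

end Measurability

theorem MeasureTheory.Integrable.log_max_one_of_le_mul_natCast {Ω : Type*} [MeasurableSpace Ω]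
    {μ : Measure Ω} [IsFiniteMeasure μ] {X : Ω → ℝ} {N : Ω → ℕ} {c : ℝ} (hc : 0 ≤ c)
    (hX : Measurable X) (hXN : ∀ᵐ ω ∂μ, X ω ≤ c * N ω)
    (hN : Integrable (fun ω => log (N ω : ℝ)) μ) :
    Integrable (fun ω => log (max (X ω) 1)) μ := by
  refine ((integrable_const (log (c + 1))).add hN).mono'
    (hX.max measurable_const).log.aestronglyMeasurable ?_
  filter_upwards [hXN] with ω hω
  rw [norm_of_nonneg (log_nonneg (le_max_right _ _))]
  exact log_max_one_le_of_le_mul_natCast hc hω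

theorem ladder_variable_bounds_general
    {Ω : Type*} [MeasurableSpace Ω] (P : Measure Ω) [IsProbabilityMeasure P]
    (M Q : ℕ → Ω → ℝ)
    (hMmeas : ∀ n, Measurable (M n)) (hQmeas : ∀ n, Measurable (Q n))
    (hQnonneg : ∀ n ω, 0 ≤ Q n ω)
    (S : ℕ → Ω → ℝ) (hS : ∀ n ω, S n ω = ∑ k ∈ Finset.range n, Real.log (M k ω))
    (σ : Ω → ℕ) (hσ : ∀ ω, σ ω = sInf {k | 1 ≤ k ∧ S k ω < 0})
    (Qlad : Ω → ℝ)
    (hQlad : ∀ ω, Qlad ω = Real.exp (S (σ ω) ω) *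
      ∑ k ∈ Finset.range (σ ω), Real.exp (-(S (k+1) ω)) * Q k ω) :
    (∀ᵐ ω ∂P,
      sSup ((fun k => Real.exp (S (σ ω) ω - S (k+1) ω) * Q k ω) '' {k | k < σ ω})
        ≤ Qlad ω ∧
      Qlad ω ≤ (σ ω : ℝ) * sSup ((fun k => Q k ω) '' {k | k < σ ω}) ∧
      ENNReal.log (ENNReal.ofReal (Qlad ω)) ≤
        ENNReal.log ((σ ω : ℕ) : ENNReal) +
          ⨆ k ∈ Finset.range (σ ω), ENNReal.log (ENNReal.ofReal (Q k ω)) ∧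
      (⨆ k ∈ Finset.range (σ ω),
          (ENNReal.log (ENNReal.ofReal (Q k ω)) + ((S (σ ω) ω - S (k+1) ω : ℝ) : EReal)))
        ≤ ENNReal.log (ENNReal.ofReal (Qlad ω))) ∧
    (∀ a b : ℝ, 0 < a → 0 < b → (∀ᵐ ω ∂P, ∀ n, Q n ω ≤ a * M n ω + b) →
      (∀ᵐ ω ∂P, Qlad ω ≤ (a + b) * σ ω) ∧
      (Integrable (fun ω => Real.log (σ ω : ℝ)) P →
        Integrable (fun ω => Real.log (max (Qlad ω) 1)) P)) := by
  have hSsucc : ∀ ω k, S (k + 1) ω = S k ω + log (M k ω) := fun ω k => by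
    simp only [hS, sum_range_succ]
  have hmin : ∀ ω, ∀ j ≤ σ ω, S (σ ω) ω ≤ S j ω := fun ω j hj => by
    rw [hσ ω] at hj ⊢
    exact apply_descendingLadderEpoch_le (s := (S · ω)) (by simp [hS]) hj
  have hQlad' : ∀ ω, Qlad ω = ∑ k ∈ range (σ ω), exp (S (σ ω) ω - S (k + 1) ω) * Q k ω :=
    fun ω => (hQlad ω).trans (exp_mul_sum_exp_neg_mul (S · ω) (Q · ω) _)
  have hterm_le : ∀ ω, ∀ k < σ ω, exp (S (σ ω) ω - S (k + 1) ω) * Q k ω ≤ Qlad ω :=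
    fun ω k hk => (exp_sub_mul_le_sum_exp_sub_mul (s := (S · ω)) (hQnonneg · ω) hk).trans_eq
      (hQlad' ω).symm
  have hle_sum : ∀ ω, Qlad ω ≤ ∑ k ∈ range (σ ω), Q k ω :=
    fun ω => (hQlad' ω).trans_le (sum_exp_sub_mul_le_sum (s := (S · ω)) (hQnonneg · ω) (hmin ω))
  refine ⟨Eventually.of_forall fun ω => ⟨?_, ?_, ?_, ?_⟩, fun a b ha hb hab => ?_⟩
  · refine Real.sSup_le (Set.forall_mem_image.2 fun k hk => hterm_le ω k hk) ?_
    exact (hQlad' ω).trans_ge (sum_exp_sub_mul_nonneg (s := (S · ω)) (hQnonneg · ω))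
  · exact (hle_sum ω).trans (sum_range_le_mul_sSup_image _ _)
  · simpa using ENNReal.log_ofReal_le_log_card_add_iSup _ (fun k _ => hQnonneg k ω) (hle_sum ω)
  · refine iSup₂_le fun k hk => ?_
    rw [← ENNReal.log_ofReal_exp_mul]
    exact ENNReal.log_monotone (ENNReal.ofReal_le_ofReal (hterm_le ω k (mem_range.1 hk)))
  have hbound : ∀ᵐ ω ∂P, Qlad ω ≤ (a + b) * σ ω := by
    filter_upwards [hab] with ω hω
    exact (hQlad' ω).trans_le
      (sum_exp_sub_mul_le_mul (s := (S · ω)) ha.le hb.le (hmin ω) (hSsucc ω) hω)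
  have hSmeas : ∀ n, Measurable (S n) := fun n => by
    rw [show S n = _ from funext (hS n)]
    exact measurable_sum _ fun k _ => (hMmeas k).log
  have hQladmeas : Measurable Qlad := by
    rw [show Qlad = _ from funext hQlad, show σ = _ from funext hσ]
    exact measurable_exp_mul_sum_exp_neg_mul hSmeas hQmeas (measurable_descendingLadderEpoch hSmeas)
  exact ⟨hbound, fun hint => hint.log_max_one_of_le_mul_natCast (by positivity) hQladmeas hbound⟩

/-- Under criticality, the ladder variable
`Q^< = e^{S_σ} Σ_{k=1}^σ e^{−S_k} Q_k` satisfies a.s. the two-sided bounds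
`max_{1≤k≤σ} e^{S_σ−S_k}Q_k ≤ Q^< ≤ σ·max_{1≤k≤σ} Q_k`; in particular (in the extended
reals) `log Q^< ≤ log σ + max_{1≤k≤σ} log Q_k` and
`log Q^< ≥ max_{1≤k≤σ}(log Q_k + S_σ − S_k)` a.s. Moreover, if `Q ≤ aM+b` a.s. for
constants `a,b > 0`, then `Q^< ≤ (a+b)σ` a.s., and `E log σ < ∞` implies
`E log₊ Q^< < ∞`. -/
theorem ladder_variable_bounds
    {Ω : Type*} [MeasurableSpace Ω] (P : Measure Ω) [IsProbabilityMeasure P]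
    (M Q : ℕ → Ω → ℝ)
    (hMmeas : ∀ n, Measurable (M n)) (hQmeas : ∀ n, Measurable (Q n))
    (hMnonneg : ∀ n ω, 0 ≤ M n ω) (hQnonneg : ∀ n ω, 0 ≤ Q n ω)
    (hindep : iIndepFun (fun n ω => (M n ω, Q n ω)) P)
    (hident : ∀ n, IdentDistrib (fun ω => (M n ω, Q n ω)) (fun ω => (M 0 ω, Q 0 ω)) P P)
    (hM0 : P {ω | M 0 ω = 0} = 0)
    (hQ0 : P {ω | Q 0 ω = 0} < 1)
    (Pi : ℕ → Ω → ℝ) (hPi : ∀ n ω, Pi n ω = ∏ k ∈ Finset.range n, M k ω)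
    (hcrit : ∀ᵐ ω ∂P, (∀ ε > (0:ℝ), ∃ᶠ n in atTop, Pi n ω < ε) ∧
      (∀ c : ℝ, ∃ᶠ n in atTop, c < Pi n ω))
    (S : ℕ → Ω → ℝ) (hS : ∀ n ω, S n ω = ∑ k ∈ Finset.range n, Real.log (M k ω))
    (σ : Ω → ℕ) (hσ : ∀ ω, σ ω = sInf {k | 1 ≤ k ∧ S k ω < 0})
    (Qlad : Ω → ℝ)
    (hQlad : ∀ ω, Qlad ω = Real.exp (S (σ ω) ω) *
      ∑ k ∈ Finset.range (σ ω), Real.exp (-(S (k+1) ω)) * Q k ω) :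
    (∀ᵐ ω ∂P,
      sSup ((fun k => Real.exp (S (σ ω) ω - S (k+1) ω) * Q k ω) '' {k | k < σ ω})
        ≤ Qlad ω ∧
      Qlad ω ≤ (σ ω : ℝ) * sSup ((fun k => Q k ω) '' {k | k < σ ω}) ∧
      ENNReal.log (ENNReal.ofReal (Qlad ω)) ≤
        ENNReal.log ((σ ω : ℕ) : ENNReal) +
          ⨆ k ∈ Finset.range (σ ω), ENNReal.log (ENNReal.ofReal (Q k ω)) ∧
      (⨆ k ∈ Finset.range (σ ω),
          (ENNReal.log (ENNReal.ofReal (Q k ω)) + ((S (σ ω) ω - S (k+1) ω : ℝ) : EReal)))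
        ≤ ENNReal.log (ENNReal.ofReal (Qlad ω))) ∧
    (∀ a b : ℝ, 0 < a → 0 < b → (∀ᵐ ω ∂P, ∀ n, Q n ω ≤ a * M n ω + b) →
      (∀ᵐ ω ∂P, Qlad ω ≤ (a + b) * σ ω) ∧
      (Integrable (fun ω => Real.log (σ ω : ℝ)) P →
        Integrable (fun ω => Real.log (max (Qlad ω) 1)) P)) :=
  ladder_variable_bounds_general P M Q hMmeas hQmeas hQnonneg S hS σ hσ Qlad hQlad
end
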